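/- We have ∑_{k=1}^{∞} ((μ(k) - φ(k))/k) · log(1 - 1/τ^k) = 1, where τ = (1 + √5)/2 is the golden ratio. -/

import Mathlib

/-!
Expanding `log (1 - x ^ k) = -∑ₘ x ^ (k m) / m` and regrouping the absolutely convergent
double series along `n = k m` gives
`∑ₖ a k / k * log (1 - x ^ k) = -∑ₙ (∑_{d ∣ n} a d) x ^ n / n` whenever `a n = O(n)`.
For `a = μ - φ` the divisor sum is `[n = 1] - n`, by Möbius inversion and
`∑_{d ∣ n} φ d = n`, so the series equals `x / (1 - x) - x = x ^ 2 / (1 - x)`.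
At `x = 1 / τ` this is `1`, since `x ^ 2 = 1 - x`.
-/

open Real

theorem hasSum_pnat_pow_div_of_abs_lt_one {y : ℝ} (hy : |y| < 1) :
    HasSum (fun m : ℕ+ => y ^ (m : ℕ) / m) (-log (1 - y)) := by
  rw [hasSum_pnat_iff_hasSum_succ (f := fun n : ℕ => y ^ n / n)]
  exact_mod_cast hasSum_pow_div_log_of_abs_lt_one hy

theorem summable_mul_pow_mul_div_mul {a : ℕ → ℝ} {C x : ℝ} (ha : ∀ n, |a n| ≤ C * n)
    (hx : |x| < 1) :
    Summable fun p : ℕ+ × ℕ+ => a p.1 * x ^ (p.1 * p.2 : ℕ) / (p.1 * p.2 : ℕ) := by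
  have hC : 0 ≤ C := by simpa using (abs_nonneg _).trans (ha 1)
  have hgeo := (summable_prod_mul_pow 0 (r := |x|) (by simpa using hx)).mul_left C
  refine Summable.of_norm_bounded hgeo fun ⟨k, m⟩ => ?_
  have hk : (0 : ℝ) < k := by positivity
  have hm : (1 : ℝ) ≤ m := Nat.one_le_cast.mpr m.pos
  calc ‖a k * x ^ (k * m : ℕ) / (k * m : ℕ)‖
      = |a k| * |x| ^ (k * m : ℕ) / (k * m) := by simp
    _ ≤ C * k * |x| ^ (k * m : ℕ) / (k * m) := by gcongr; exact ha k
    _ = C * |x| ^ (k * m : ℕ) / m := by field_simp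
    _ ≤ C * ((m : ℝ) ^ 0 * |x| ^ (k * m : ℕ)) := by
        rw [pow_zero, one_mul]
        exact div_le_self (by positivity) hm

theorem tsum_div_mul_log_one_sub_pow {a : ℕ → ℝ} {C x : ℝ} (ha : ∀ n, |a n| ≤ C * n)
    (hx : |x| < 1) :
    ∑' k : ℕ+, a k / k * log (1 - x ^ (k : ℕ)) =
      -∑' n : ℕ+, (∑ d ∈ (n : ℕ).divisors, a d) * x ^ (n : ℕ) / n := by
  set F : ℕ+ × ℕ+ → ℝ := fun p => a p.1 * x ^ (p.1 * p.2 : ℕ) / (p.1 * p.2 : ℕ)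
  have hF : Summable F := summable_mul_pow_mul_div_mul ha hx
  have hrow (k : ℕ+) : ∑' m, F (k, m) = -(a k / k * log (1 - x ^ (k : ℕ))) := by
    have hxk : |x ^ (k : ℕ)| < 1 := by
      rw [abs_pow]; exact pow_lt_one₀ (abs_nonneg x) hx k.ne_zero
    calc ∑' m, F (k, m) = ∑' m : ℕ+, a k / k * ((x ^ (k : ℕ)) ^ (m : ℕ) / m) := by
          refine tsum_congr fun m => ?_
          simp only [F, pow_mul]; push_cast; field_simp
      _ = -(a k / k * log (1 - x ^ (k : ℕ))) := by
          rw [((hasSum_pnat_pow_div_of_abs_lt_one hxk).mul_left _).tsum_eq, mul_neg]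
  have hfiber (n : ℕ+) :
      ∑' c : (n : ℕ).divisorsAntidiagonal, F (divisorsAntidiagonalFactors n c) =
        (∑ d ∈ (n : ℕ).divisors, a d) * x ^ (n : ℕ) / n := by
    rw [tsum_fintype, Finset.univ_eq_attach, Finset.sum_mul, Finset.sum_div,
      ← Nat.sum_divisorsAntidiagonal (fun d _ => a d * x ^ (n : ℕ) / n)]
    refine (Finset.sum_attach _
      (fun p : ℕ × ℕ => a p.1 * x ^ (p.1 * p.2) / (p.1 * p.2 : ℕ))).trans ?_
    refine Finset.sum_congr rfl fun p hp => ?_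
    rw [(Nat.mem_divisorsAntidiagonal.mp hp).1]
  calc ∑' k : ℕ+, a k / k * log (1 - x ^ (k : ℕ))
      = -∑' p, F p := by rw [hF.tsum_prod, ← tsum_neg]; simp_rw [hrow, neg_neg]
    _ = -∑' n : ℕ+, (∑ d ∈ (n : ℕ).divisors, a d) * x ^ (n : ℕ) / n := by
      rw [← sigmaAntidiagonalEquivProd.tsum_eq]
      have hσ : Summable fun c => F (sigmaAntidiagonalEquivProd c) :=
        sigmaAntidiagonalEquivProd.summable_iff.mpr hF
      rw [hσ.tsum_sigma]
      simp_rw [← hfiber]; rfl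

theorem hasSum_ite_one_sub_mul_pow_div {x : ℝ} (hx : |x| < 1) :
    HasSum (fun n : ℕ+ => ((if (n : ℕ) = 1 then 1 else 0) - n) * x ^ (n : ℕ) / n)
      (x - x / (1 - x)) := by
  have hgeo : HasSum (fun n : ℕ+ => x ^ (n : ℕ)) (x / (1 - x)) := by
    rw [hasSum_pnat_iff_hasSum_succ (f := fun n : ℕ => x ^ n)]
    simpa [pow_succ', div_eq_mul_inv] using (hasSum_geometric_of_abs_lt_one hx).mul_left x
  refine ((hasSum_ite_eq 1 x).sub hgeo).congr_fun fun n => ?_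
  rcases eq_or_ne n 1 with rfl | hn
  · simp
  · have : (n : ℝ) ≠ 0 := by positivity
    simp only [PNat.coe_eq_one_iff, hn, if_false, zero_sub, neg_mul]
    field_simp

section

open ArithmeticFunction ArithmeticFunction.Moebius

theorem abs_moebius_sub_totient_le (n : ℕ) : |(μ n : ℝ) - n.totient| ≤ 2 * n := by
  have hμ : |(μ n : ℝ)| ≤ n := by
    rcases n.eq_zero_or_pos with rfl | hn
    · simp
    · exact_mod_cast abs_moebius_le_one.trans (by exact_mod_cast hn : (1 : ℤ) ≤ n)
  have hφ : (n.totient : ℝ) ≤ n := by exact_mod_cast n.totient_le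
  calc |(μ n : ℝ) - n.totient| ≤ |(μ n : ℝ)| + n.totient := by
        simpa using abs_sub (μ n : ℝ) n.totient
    _ ≤ 2 * n := by linarith

theorem sum_divisors_moebius_sub_totient (n : ℕ) :
    ∑ d ∈ n.divisors, ((μ d : ℝ) - d.totient) = (if n = 1 then 1 else 0) - n := by
  have hμ : ∑ d ∈ n.divisors, (μ d : ℝ) = if n = 1 then 1 else 0 := by
    have := congrArg (· n) (coe_moebius_mul_coe_zeta (R := ℝ))
    simp only [coe_mul_zeta_apply, intCoe_apply, one_apply] at this
    exact this
  rw [Finset.sum_sub_distrib, hμ]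
  exact_mod_cast congrArg _ n.sum_totient

theorem tsum_moebius_sub_totient_div_mul_log_one_sub_pow {x : ℝ} (hx : |x| < 1) :
    ∑' k : ℕ+, ((μ k : ℝ) - (k : ℕ).totient) / k * log (1 - x ^ (k : ℕ)) =
      x ^ 2 / (1 - x) := by
  have hx1 : 1 - x ≠ 0 := by linarith [(abs_lt.mp hx).2]
  rw [tsum_div_mul_log_one_sub_pow abs_moebius_sub_totient_le hx]
  simp_rw [sum_divisors_moebius_sub_totient]
  rw [(hasSum_ite_one_sub_mul_pow_div hx).tsum_eq]
  field_simp
  ring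

end

/-- ∑_{k=1}^∞ ((μ(k) - φ(k))/k) log(1 - 1/τ^k) = 1, where τ = (1+√5)/2. -/
theorem golden_moebius_totient_series :
    ∑' k : ℕ,
        (((ArithmeticFunction.moebius (k + 1) : ℝ) - (Nat.totient (k + 1) : ℝ)) /
            (k + 1 : ℝ)) *
          Real.log (1 - 1 / ((1 + Real.sqrt 5) / 2) ^ (k + 1)) = 1 := by
  have hx : |goldenRatio⁻¹| < 1 := by
    rw [abs_inv, abs_of_pos goldenRatio_pos]
    exact inv_lt_one_of_one_lt₀ one_lt_goldenRatio
  have hseries := tsum_moebius_sub_totient_div_mul_log_one_sub_pow hx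
  rw [tsum_pnat_eq_tsum_succ (f := fun k : ℕ => ((ArithmeticFunction.moebius k : ℝ) -
    k.totient) / k * log (1 - goldenRatio⁻¹ ^ k))] at hseries
  push_cast at hseries
  -- `goldenRatio` is the abbreviation `(1 + √5) / 2`, so the two series agree up to `inv_pow`.
  calc _ = goldenRatio⁻¹ ^ 2 / (1 - goldenRatio⁻¹) := by
        rw [← hseries]; simp only [one_div, inv_pow]
    _ = 1 := by
      rw [inv_goldenRatio, neg_sq, goldenConj_sq, sub_neg_eq_add, add_comm]
      exact div_self (by linarith [neg_one_lt_goldenConj] : 0 < 1 + goldenConj).ne'
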